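/- The determinant of the x × x Redheffer matrix R, where R(i,j) = 1 if i divides j or j = 1 and R(i,j) = 0 otherwise, equals the Mertens function M(x) = ∑_{n=1}^{x} μ(n). -/

import Mathlib

/-
The Redheffer matrix is the divisibility matrix `U = ([i ∣ j])` with its first column replaced
by the all-ones vector. By Cramer's rule its determinant is the first entry of `adj U · 1`.
`U` is unitriangular, so `adj U = U⁻¹`, and Möbius inversion gives `U⁻¹ = ([i ∣ j] μ(j / i))`;
the first entry of `U⁻¹ · 1` is therefore `∑_{j ≤ x} μ(j) = M(x)`.
-/

open Finset ArithmeticFunction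

/-- Mertens function `M(k) = ∑_{i=1}^{k} μ(i)`. -/
def Mertens (k : ℕ) : ℤ := ∑ i ∈ Finset.Icc 1 k, ArithmeticFunction.moebius i

open scoped ArithmeticFunction.Moebius

theorem sum_divisors_moebius (n : ℕ) :
    ∑ d ∈ n.divisors, (μ d : ℤ) = if n = 1 then 1 else 0 := by
  have h := congr($moebius_mul_coe_zeta n)
  rwa [coe_mul_zeta_apply, one_apply] at h

theorem sum_divisors_filter_dvd_moebius_div {i m : ℕ} (hm : m ≠ 0) :
    ∑ k ∈ m.divisors with i ∣ k, (μ (m / k) : ℤ) = if m = i then 1 else 0 := by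
  by_cases him : i ∣ m
  · have hi : 0 < i := Nat.pos_of_dvd_of_pos him (Nat.pos_of_ne_zero hm)
    rw [sum_filter, ← Nat.sum_div_divisors m fun k => if i ∣ k then (μ (m / k) : ℤ) else 0]
    have hterm : ∀ d ∈ m.divisors, (if i ∣ m / d then (μ (m / (m / d)) : ℤ) else 0)
        = if d ∣ m / i then (μ d : ℤ) else 0 := by
      intro d hd
      have hdm := Nat.dvd_of_mem_divisors hd
      simp only [Nat.div_div_self hdm hm, Nat.dvd_div_iff_mul_dvd hdm, Nat.dvd_div_iff_mul_dvd him,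
        mul_comm]
    rw [sum_congr rfl hterm, ← sum_filter,
      Nat.divisors_filter_dvd_of_dvd hm (Nat.div_dvd_of_dvd him), sum_divisors_moebius]
    simp only [Nat.div_eq_iff_eq_mul_left hi him, one_mul]
  · rw [sum_eq_zero, if_neg (by rintro rfl; exact him dvd_rfl)]
    intro k hk
    simp only [mem_filter, Nat.mem_divisors] at hk
    exact absurd (hk.2.trans hk.1.1) him

theorem Fin.sum_univ_eq_sum_Icc {M : Type*} [AddCommMonoid M] (f : ℕ → M) (n : ℕ) :
    ∑ k : Fin n, f (k + 1) = ∑ k ∈ Icc 1 n, f k := by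
  rw [Fin.sum_univ_eq_sum_range (fun k => f (k + 1)), range_eq_Ico, sum_Ico_add']
  rfl

def divisibilityMatrix (n : ℕ) : Matrix (Fin n) (Fin n) ℤ :=
  Matrix.of fun i j => if (i : ℕ) + 1 ∣ j + 1 then 1 else 0

def moebiusMatrix (n : ℕ) : Matrix (Fin n) (Fin n) ℤ :=
  Matrix.of fun i j => if (i : ℕ) + 1 ∣ j + 1 then μ ((j + 1) / (i + 1)) else 0

theorem det_divisibilityMatrix (n : ℕ) : (divisibilityMatrix n).det = 1 := by
  rw [Matrix.det_of_isUpperTriangular]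
  · simp [divisibilityMatrix]
  · intro i j hji
    have hndvd : ¬ (i : ℕ) + 1 ∣ j + 1 := fun h => by
      have := Nat.le_of_dvd (Nat.succ_pos j) h
      simp only [id, Fin.lt_def] at hji
      omega
    simp [divisibilityMatrix, hndvd]

theorem divisibilityMatrix_mul_moebiusMatrix (n : ℕ) :
    divisibilityMatrix n * moebiusMatrix n = 1 := by
  ext i j
  have hsub : (j + 1 : ℕ).divisors ⊆ Icc 1 n := fun d hd =>
    mem_Icc.2 ⟨Nat.pos_of_mem_divisors hd, (Nat.divisor_le hd).trans j.isLt⟩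
  calc (divisibilityMatrix n * moebiusMatrix n) i j
      = ∑ k ∈ Icc 1 n, if ((i : ℕ) + 1 ∣ k ∧ k ∣ j + 1) then (μ ((j + 1) / k) : ℤ) else 0 := by
        rw [Matrix.mul_apply, ← Fin.sum_univ_eq_sum_Icc]
        refine sum_congr rfl fun k _ => ?_
        simp only [divisibilityMatrix, moebiusMatrix, Matrix.of_apply, boole_mul, ite_and]
    _ = ∑ k ∈ (j + 1 : ℕ).divisors with (i : ℕ) + 1 ∣ k, (μ ((j + 1) / k) : ℤ) := by
        rw [sum_filter, ← sum_subset hsub]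
        · refine sum_congr rfl fun k hk => ?_
          simp [Nat.dvd_of_mem_divisors hk]
        · intro k _ hk
          rw [if_neg]
          rintro ⟨-, hkj⟩
          exact hk (Nat.mem_divisors.2 ⟨hkj, Nat.succ_ne_zero j⟩)
    _ = (1 : Matrix (Fin n) (Fin n) ℤ) i j := by
        rw [sum_divisors_filter_dvd_moebius_div (Nat.succ_ne_zero j), Matrix.one_apply]
        simp [Fin.ext_iff, eq_comm]

theorem adjugate_divisibilityMatrix (n : ℕ) :
    (divisibilityMatrix n).adjugate = moebiusMatrix n := by
  rw [← Matrix.inv_eq_right_inv (divisibilityMatrix_mul_moebiusMatrix n), Matrix.inv_def,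
    det_divisibilityMatrix, Ring.inverse_one, one_smul]

theorem stmt_16 (x : ℕ) (hx : 0 < x) :
    Matrix.det (fun i j : Fin x =>
        if (i.val + 1) ∣ (j.val + 1) ∨ j.val + 1 = 1 then (1 : ℤ) else 0) =
      Mertens x := by
  have hR : (fun i j : Fin x =>
        if (i.val + 1) ∣ (j.val + 1) ∨ j.val + 1 = 1 then (1 : ℤ) else 0) =
      (divisibilityMatrix x).updateCol ⟨0, hx⟩ 1 := by
    ext i j
    by_cases hj : (j : ℕ) = 0
    · obtain rfl : j = ⟨0, hx⟩ := Fin.ext hj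
      simp
    · simp [divisibilityMatrix, Fin.ext_iff, hj]
  rw [hR, ← Matrix.cramer_apply, Matrix.cramer_eq_adjugate_mulVec, adjugate_divisibilityMatrix,
    Mertens, ← Fin.sum_univ_eq_sum_Icc]
  simp [Matrix.mulVec, dotProduct, moebiusMatrix]
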